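/- For every t ∈ ℝ, exp(−i·(H_0 + H_f)·t)|s⟩ = e^{−it}·(cos(t/√N)·|s⟩ + i·sin(t/√N)·|m⟩). (This is an exact identity, valid for all N ≥ 2 and all t.) -/

import Mathlib

/-- The rank-one projector `|ψ⟩⟨ψ|`, mapping `v` to `⟪ψ, v⟫ • ψ`. -/
noncomputable def proj {H : Type*} [NormedAddCommGroup H] [InnerProductSpace ℂ H]
    (ψ : H) : H →L[ℂ] H := (innerSL ℂ ψ).smulRight ψ

/-- The uniform superposition `|s⟩ = (1/√N) ∑_x |x⟩`. -/
noncomputable def uniformState (N : ℕ) : EuclideanSpace ℂ (Fin N) :=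
  ((1 / Real.sqrt N : ℝ) : ℂ) • ∑ x : Fin N, EuclideanSpace.single x (1 : ℂ)

/-!
On the span of `|s⟩` and `|m⟩`, which contains the initial state, the Hamiltonian
`H⁰ + H_f = 2 − |s⟩⟨s| − |m⟩⟨m|` has the eigenvectors `|s⟩ ± |m⟩` with eigenvalues `1 ∓ a`,
where `a = ⟨s|m⟩ = 1/√N`. Splitting `|s⟩` as half their sum and half their difference, the
evolution multiplies the two halves by `e^{−it(1 ∓ a)}`, and recombining gives
`e^{−it}(cos(ta)|s⟩ + i sin(ta)|m⟩)`.
-/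

open NormedSpace

theorem NormedSpace.exp_apply_of_apply_eq_smul {𝕂 E : Type*} [RCLike 𝕂] [NormedAddCommGroup E]
    [NormedSpace 𝕂 E] [CompleteSpace E] {T : E →L[𝕂] E} {c : 𝕂} {x : E} (h : T x = c • x) :
    exp T x = exp c • x := by
  have hpow : ∀ n : ℕ, (T ^ n) x = c ^ n • x := by
    intro n
    induction n with
    | zero => simp
    | succ n ih => rw [pow_succ', mul_apply_eq_comp, ih, map_smul, h, smul_smul, pow_succ]
  have hT := (exp_series_hasSum_exp' (𝕂 := 𝕂) T).mapL (ContinuousLinearMap.apply 𝕂 E x)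
  have hc := (exp_series_hasSum_exp' (𝕂 := 𝕂) c).smul_const x
  refine hT.unique ?_
  simpa only [ContinuousLinearMap.apply_apply, smul_apply, hpow, smul_smul, smul_eq_mul] using hc

section SearchHamiltonian

variable {H : Type*} [NormedAddCommGroup H] [InnerProductSpace ℂ H]

theorem proj_apply (ψ v : H) : proj ψ v = inner ℂ ψ v • ψ := rfl

/-- `H⁰ + H_f` for the initial state `ψ` and the marked state `φ`. -/
noncomputable def searchHamiltonian (ψ φ : H) : H →L[ℂ] H := (1 - proj ψ) + (1 - proj φ)

variable {s e : H} {a : ℝ}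

theorem searchHamiltonian_apply_add (hs : ‖s‖ = 1) (he : ‖e‖ = 1) (hse : inner ℂ s e = a) :
    searchHamiltonian s e (s + e) = (1 - a : ℂ) • (s + e) := by
  have hes : inner ℂ e s = (a : ℂ) := by rw [← inner_conj_symm, hse, Complex.conj_ofReal]
  simp only [searchHamiltonian, add_apply, sub_apply, one_apply_eq_self, proj_apply,
    inner_add_right, inner_self_eq_one_of_norm_eq_one hs, inner_self_eq_one_of_norm_eq_one he,
    hse, hes]
  module

theorem searchHamiltonian_apply_sub (hs : ‖s‖ = 1) (he : ‖e‖ = 1) (hse : inner ℂ s e = a) :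
    searchHamiltonian s e (s - e) = (1 + a : ℂ) • (s - e) := by
  have hes : inner ℂ e s = (a : ℂ) := by rw [← inner_conj_symm, hse, Complex.conj_ofReal]
  simp only [searchHamiltonian, add_apply, sub_apply, one_apply_eq_self, proj_apply,
    inner_sub_right, inner_self_eq_one_of_norm_eq_one hs, inner_self_eq_one_of_norm_eq_one he,
    hse, hes]
  module

theorem exp_searchHamiltonian_apply_left [CompleteSpace H] (hs : ‖s‖ = 1) (he : ‖e‖ = 1)
    (hse : inner ℂ s e = a) (t : ℝ) :
    exp ((-(Complex.I * t)) • searchHamiltonian s e) s =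
      Complex.exp (-(Complex.I * t)) •
        ((Real.cos (t * a) : ℂ) • s + (Complex.I * Real.sin (t * a)) • e) := by
  set U := exp ((-(Complex.I * t)) • searchHamiltonian s e)
  have evolve_add : U (s + e) = exp (-(Complex.I * t) * (1 - a)) • (s + e) :=
    exp_apply_of_apply_eq_smul
      (by rw [smul_apply, searchHamiltonian_apply_add hs he hse, smul_smul])
  have evolve_sub : U (s - e) = exp (-(Complex.I * t) * (1 + a)) • (s - e) :=
    exp_apply_of_apply_eq_smul
      (by rw [smul_apply, searchHamiltonian_apply_sub hs he hse, smul_smul])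
  have phase_add : -(Complex.I * t) * (1 - a) = -(Complex.I * t) + (t * a : ℝ) * Complex.I := by
    push_cast; ring
  have phase_sub :
      -(Complex.I * t) * (1 + a) = -(Complex.I * t) + -((t * a : ℝ) : ℂ) * Complex.I := by
    push_cast; ring
  rw [← Complex.exp_eq_exp_ℂ, phase_add, Complex.exp_add, Complex.exp_mul_I] at evolve_add
  rw [← Complex.exp_eq_exp_ℂ, phase_sub, Complex.exp_add, Complex.exp_mul_I, Complex.cos_neg,
    Complex.sin_neg] at evolve_sub
  have split : s = (1 / 2 : ℂ) • (s + e) + (1 / 2 : ℂ) • (s - e) := by module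
  conv_lhs => rw [split]
  rw [map_add, map_smul, map_smul, evolve_add, evolve_sub, Complex.ofReal_cos, Complex.ofReal_sin]
  match_scalars <;> ring

end SearchHamiltonian

theorem uniformState_apply {N : ℕ} (x : Fin N) :
    uniformState N x = ((1 / Real.sqrt N : ℝ) : ℂ) := by
  simp [uniformState]

theorem norm_uniformState {N : ℕ} (hN : 0 < N) : ‖uniformState N‖ = 1 := by
  have hN' : (0 : ℝ) < N := by exact_mod_cast hN
  simp only [EuclideanSpace.norm_eq, uniformState_apply, Complex.norm_real,
    Real.norm_eq_abs, sq_abs, Finset.sum_const, Finset.card_univ, Fintype.card_fin, nsmul_eq_mul,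
    div_pow, one_pow, Real.sq_sqrt hN'.le, mul_one_div_cancel hN'.ne', Real.sqrt_one]

theorem inner_uniformState_single {N : ℕ} (m : Fin N) :
    inner ℂ (uniformState N) (EuclideanSpace.single m 1) = ((1 / Real.sqrt N : ℝ) : ℂ) := by
  rw [EuclideanSpace.inner_single_right, uniformState_apply, Complex.conj_ofReal,
    one_mul]

theorem exp_analogSearch_apply_uniformState_general (N : ℕ) (m : Fin N) (t : ℝ) :
    (NormedSpace.exp
      ((-(Complex.I * (t : ℂ))) •
        (((1 : EuclideanSpace ℂ (Fin N) →L[ℂ] EuclideanSpace ℂ (Fin N)) -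
            proj (uniformState N)) +
          ((1 : EuclideanSpace ℂ (Fin N) →L[ℂ] EuclideanSpace ℂ (Fin N)) -
            proj (EuclideanSpace.single m 1)))) :
      EuclideanSpace ℂ (Fin N) →L[ℂ] EuclideanSpace ℂ (Fin N))
      (uniformState N) =
    Complex.exp (-(Complex.I * (t : ℂ))) •
      (((Real.cos (t / Real.sqrt N) : ℝ) : ℂ) • uniformState N +
        (Complex.I * ((Real.sin (t / Real.sqrt N) : ℝ) : ℂ)) •
          EuclideanSpace.single m (1 : ℂ)) := by
  rw [div_eq_mul_one_div]
  exact exp_searchHamiltonian_apply_left (norm_uniformState m.pos)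
    (by simp) (inner_uniformState_single m) t

/-- The analog quantum search of Farhi–Gutmann: the evolution under the
time-independent Hamiltonian `H⁰ + H_f` (with `H⁰ = I − |s⟩⟨s|` and
`H_f = I − |m⟩⟨m|`) starting from the uniform superposition `|s⟩` is an exact
rotation, `exp(−i(H⁰+H_f)t)|s⟩ = e^{−it}(cos(t/√N)|s⟩ + i sin(t/√N)|m⟩)`. -/
theorem exp_analogSearch_apply_uniformState (N : ℕ) (hN : 2 ≤ N) (m : Fin N) (t : ℝ) :
    (NormedSpace.exp
      ((-(Complex.I * (t : ℂ))) •
        (((1 : EuclideanSpace ℂ (Fin N) →L[ℂ] EuclideanSpace ℂ (Fin N)) -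
            proj (uniformState N)) +
          ((1 : EuclideanSpace ℂ (Fin N) →L[ℂ] EuclideanSpace ℂ (Fin N)) -
            proj (EuclideanSpace.single m 1)))) :
      EuclideanSpace ℂ (Fin N) →L[ℂ] EuclideanSpace ℂ (Fin N))
      (uniformState N) =
    Complex.exp (-(Complex.I * (t : ℂ))) •
      (((Real.cos (t / Real.sqrt N) : ℝ) : ℂ) • uniformState N +
        (Complex.I * ((Real.sin (t / Real.sqrt N) : ℝ) : ℂ)) •
          EuclideanSpace.single m (1 : ℂ)) :=
  exp_analogSearch_apply_uniformState_general N m t
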